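/- arXiv:1706.09993 — 2 statements merged into one kernel-verified Lean document; each statement's English description precedes it below -/
import Mathlib

section
/- Fix vectors x, z ∈ ℝⁿ and a probability measure μ on the unit sphere S^{n−1}, and let P = P_μ be the generalized Kaczmarz projection with respect to μ. Then E‖Pz − x‖₂² ≤ [1 − λ_min(E[aaᵀ] − 4·E[aaᵀ·1_{W_{x,z}}(a)])]·‖z − x‖₂², where a ∼ μ and λ_min denotes the smallest eigenvalue of a symmetric matrix. -/
open MeasureTheory ProbabilityTheory
open scoped RealInnerProductSpace ENNReal BigOperators

noncomputable section

/-- `ℝⁿ` with the Euclidean structure. -/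
abbrev Euc (n : ℕ) := EuclideanSpace ℝ (Fin n)

/-- The sign function used in the paper: `sgn t = 1` if `t ≥ 0` and `-1` otherwise. -/
def sgn (t : ℝ) : ℝ := if 0 ≤ t then 1 else -1

/-- One (generalized) Kaczmarz step for phase retrieval with signal `x`,
measurement vector `a`, applied to the current iterate `z`:
`Pz = z + (sign(⟨a,z⟩)·|⟨a,x⟩| − ⟨a,z⟩) a`. -/
def kacStep {n : ℕ} (x a z : Euc n) : Euc n :=
  z + (sgn ⟪a, z⟫ * |⟪a, x⟫| - ⟪a, z⟫) • a

/-- The randomized Kaczmarz iterates `X_k = P_k ⋯ P_1 x₀`, where step `k+1`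
uses the measurement vector `a k`. -/
def kacIter {n : ℕ} (x : Euc n) (a : ℕ → Euc n) (x0 : Euc n) : ℕ → Euc n
  | 0 => x0
  | k + 1 => kacStep x (a k) (kacIter x a x0 k)

/-- The spherical wedge `W_{x,z}`: points of the unit sphere where the signs of
`⟨v,x⟩` and `⟨v,z⟩` disagree. -/
def wedge {n : ℕ} (x z : Euc n) : Set (Euc n) :=
  {v | v ∈ Metric.sphere (0 : Euc n) 1 ∧ sgn ⟪v, x⟫ ≠ sgn ⟪v, z⟫}

/-- The matrix `E_{a∼μ}[a aᵀ]`. -/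
def covMat {n : ℕ} (μ : Measure (Euc n)) : Matrix (Fin n) (Fin n) ℝ :=
  Matrix.of fun i j => ∫ a, a i * a j ∂μ

/-- The matrix `E_{a∼μ}[a aᵀ 1_W(a)]`. -/
def covMatOn {n : ℕ} (μ : Measure (Euc n)) (W : Set (Euc n)) : Matrix (Fin n) (Fin n) ℝ :=
  Matrix.of fun i j => ∫ a in W, a i * a j ∂μ

/-- The quadratic form `vᵀ M v` of a matrix. -/
def quadForm {n : ℕ} (M : Matrix (Fin n) (Fin n) ℝ) (v : Euc n) : ℝ :=
  ∑ i, ∑ j, v i * M i j * v j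

/-- The smallest eigenvalue of a symmetric matrix, via the Rayleigh quotient
characterization `λ_min(M) = inf_{‖v‖=1} vᵀMv`. -/
def lamMin {n : ℕ} (M : Matrix (Fin n) (Fin n) ℝ) : ℝ :=
  ⨅ v : {v : Euc n // ‖v‖ = 1}, quadForm M (v : Euc n)

/-- The largest eigenvalue of a symmetric matrix, via the Rayleigh quotient
characterization `λ_max(M) = sup_{‖v‖=1} vᵀMv`. -/
def lamMax {n : ℕ} (M : Matrix (Fin n) (Fin n) ℝ) : ℝ :=
  ⨆ v : {v : Euc n // ‖v‖ = 1}, quadForm M (v : Euc n)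

/-- The uniform probability measure on the unit sphere `S^{n-1} ⊂ ℝⁿ`:
the normalized `(n-1)`-dimensional Hausdorff measure on the sphere. -/
def sphereUniform (n : ℕ) : Measure (Euc n) :=
  (μH[(n : ℝ) - 1] (Metric.sphere (0 : Euc n) 1))⁻¹ •
    (μH[(n : ℝ) - 1]).restrict (Metric.sphere (0 : Euc n) 1)

/-- The `ACW(θ, α)` (anti-concentration on wedges) condition: for every wedge `W`
of angle less than `θ`, `λ_min(E[aaᵀ] − 4 E[aaᵀ 1_W(a)]) ≥ α/n`. -/
def ACW {n : ℕ} (μ : Measure (Euc n)) (θ α : ℝ) : Prop :=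
  ∀ x z : Euc n, x ≠ 0 → z ≠ 0 → InnerProductGeometry.angle x z < θ →
    lamMin (covMat μ - (4 : ℝ) • covMatOn μ (wedge x z)) ≥ α / n

/-- The hitting time `τ = min{k : X_k ∉ B}` (equal to `⊤ = ∞` if the trajectory
never leaves `B`). -/
def hitTime {n : ℕ} (B : Set (Euc n)) (X : ℕ → Euc n) : ℕ∞ :=
  ⨅ j ∈ {j : ℕ | X j ∉ B}, (j : ℕ∞)

/-- The stopped iterate `X_{τ ∧ k}` where `τ = hitTime B`. -/
def stoppedIter {n : ℕ} (x : Euc n) (a : ℕ → Euc n) (x0 : Euc n) (B : Set (Euc n)) (k : ℕ) :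
    Euc n :=
  kacIter x a x0 (min (hitTime B (kacIter x a x0)) (k : ℕ∞)).toNat

/-- The filtration `(F_k)` where `F_k = σ(a_0, …, a_{k-1})` is generated by the
first `k` measurement vectors. -/
def measFiltration {Ω : Type*} {mΩ : MeasurableSpace Ω} {n : ℕ}
    (A : ℕ → Ω → Euc n) (hA : ∀ i, Measurable (A i)) : Filtration ℕ mΩ where
  seq k := ⨆ j ∈ Set.Iio k, MeasurableSpace.comap (A j) inferInstance
  mono' _ _ hij := biSup_mono fun _ ha => lt_of_lt_of_le ha hij
  le' _ := iSup₂_le fun j _ => measurable_iff_comap_le.mp (hA j)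

/-- The set `S_τ` of `{0,1}`-vectors of length `m` with at most `τ·m` ones. -/
def selVecs (m : ℕ) (τ : ℝ) : Set (Fin m → ℝ) :=
  {s | (∀ i, s i = 0 ∨ s i = 1) ∧ ∑ i, s i ≤ τ * m}

/-- The Euclidean unit ball `B₂ⁿ ⊂ ℝⁿ`. -/
def unitBall (n : ℕ) : Set (Euc n) :=
  {v | ‖v‖ ≤ 1}

/-- A process `(Y_t)_{t ∈ T}` has *mixed tail increments* with respect to a pair of
metrics `(d₁, d₂)`: there are constants `c, C > 0` with
`P(|Y_s − Y_t| ≥ c(√u d₂(s,t) + u d₁(s,t))) ≤ C e^{−u}` for all `s,t,u`. -/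
def HasMixedTailIncrements {Ω T : Type*} [MeasurableSpace Ω] (P : Measure Ω)
    (Y : T → Ω → ℝ) (d₁ d₂ : T → T → ℝ) : Prop :=
  ∃ c C : ℝ, 0 < c ∧ 0 < C ∧ ∀ s t : T, ∀ u : ℝ, 0 < u →
    P {ω | c * (Real.sqrt u * d₂ s t + u * d₁ s t) ≤ |Y s ω - Y t ω|} ≤
      ENNReal.ofReal (C * Real.exp (-u))

/-- An admissible sequence of subsets: `|T₀| = 1` and `|T_k| ≤ 2^(2^k)` for `k ≥ 1`
(the sets are taken nonempty so that distances to them are meaningful). -/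
def Admissible {T : Type*} (Ts : ℕ → Finset T) : Prop :=
  (Ts 0).card = 1 ∧ (∀ k, 1 ≤ k → (Ts k).card ≤ 2 ^ 2 ^ k) ∧ ∀ k, (Ts k).Nonempty

/-- The distance from a point to a finite set, for an abstract metric `d`. -/
def distToFinset {T : Type*} (d : T → T → ℝ) (t : T) (S : Finset T) : ℝ :=
  sInf ((fun u => d t u) '' (S : Set T))

/-- Talagrand's `γ_α` functional of a metric space `(T, d)` (here `T` is a type and
`d` an abstract metric on it): `γ_α(T,d) = inf_{(T_k)} sup_t Σ_k 2^{k/α} d(t, T_k)`,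
the infimum being over admissible sequences. -/
def gammaFunctional {T : Type*} (α : ℝ) (d : T → T → ℝ) : ℝ :=
  ⨅ Ts : {Ts : ℕ → Finset T // Admissible Ts},
    ⨆ t : T, ∑' k : ℕ, (2 : ℝ) ^ ((k : ℝ) / α) * distToFinset d t ((Ts : ℕ → Finset T) k)

end

/-! With `e = z - x` and a unit vector `a`, a step is `Pz - x = e + η a`. Off the wedge
`η = -⟪a, e⟫`, so `Pz` is the orthogonal projection of `z` onto the hyperplane through `x` and
`‖Pz - x‖² = ‖e‖² - ⟪a, e⟫²`. On the wedge `z` is projected onto the hyperplane through the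
reflection of `x`, which costs an extra `4⟪a, x⟫² ≤ 4⟪a, e⟫²`, since `⟪a, x⟫` and `⟪a, z⟫` have
opposite signs. Averaging over `a ∼ μ` turns `⟪a, e⟫²` into the quadratic forms of `E[aaᵀ]` and
`E[aaᵀ 1_W]`, and the Rayleigh-quotient definition of `λ_min` gives `eᵀMe ≥ λ_min(M) ‖e‖²`. -/

section QuadForm

variable {n : ℕ}

lemma quadForm_sub_smul (A B : Matrix (Fin n) (Fin n) ℝ) (c : ℝ) (v : Euc n) :
    quadForm (A - c • B) v = quadForm A v - c * quadForm B v := by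
  simp only [quadForm, Matrix.sub_apply, Matrix.smul_apply, smul_eq_mul, Finset.mul_sum,
    ← Finset.sum_sub_distrib]
  exact Finset.sum_congr rfl fun i _ => Finset.sum_congr rfl fun j _ => by ring

lemma quadForm_smul (M : Matrix (Fin n) (Fin n) ℝ) (c : ℝ) (v : Euc n) :
    quadForm M (c • v) = c ^ 2 * quadForm M v := by
  simp only [quadForm, PiLp.smul_apply, smul_eq_mul, Finset.mul_sum]
  exact Finset.sum_congr rfl fun i _ => Finset.sum_congr rfl fun j _ => by ring

lemma continuous_quadForm (M : Matrix (Fin n) (Fin n) ℝ) : Continuous (quadForm M) := by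
  unfold quadForm
  fun_prop

lemma lamMin_le_quadForm (M : Matrix (Fin n) (Fin n) ℝ) {u : Euc n} (hu : ‖u‖ = 1) :
    lamMin M ≤ quadForm M u := by
  have hbdd : BddBelow (Set.range fun v : {v : Euc n // ‖v‖ = 1} => quadForm M v) := by
    refine ((isCompact_sphere (0 : Euc n) 1).bddBelow_image
      (continuous_quadForm M).continuousOn).mono ?_
    rintro _ ⟨v, rfl⟩
    exact ⟨v, by simp [v.2], rfl⟩
  exact ciInf_le hbdd ⟨u, hu⟩

lemma lamMin_mul_norm_sq_le (M : Matrix (Fin n) (Fin n) ℝ) (v : Euc n) :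
    lamMin M * ‖v‖ ^ 2 ≤ quadForm M v := by
  rcases eq_or_ne v 0 with rfl | hv
  · simp [quadForm]
  have hv' : ‖v‖ ≠ 0 := norm_ne_zero_iff.mpr hv
  have hunit : ‖‖v‖⁻¹ • v‖ = 1 := by
    rw [norm_smul, norm_inv, norm_norm, inv_mul_cancel₀ hv']
  have h := lamMin_le_quadForm M hunit
  rw [quadForm_smul, inv_pow, inv_mul_eq_div, le_div_iff₀ (by positivity)] at h
  linarith

end QuadForm

section Sgn

lemma sgn_mul_abs (s : ℝ) : sgn s * |s| = s := by
  unfold sgn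
  split_ifs with hs
  · rw [one_mul, abs_of_nonneg hs]
  · rw [abs_of_neg (not_le.mp hs)]
    ring

lemma sgn_eq_neg_of_sgn_ne {s t : ℝ} (h : sgn s ≠ sgn t) : sgn t = -sgn s := by
  unfold sgn at *
  split_ifs at * <;> norm_num at *

lemma mul_nonpos_of_sgn_ne {s t : ℝ} (h : sgn s ≠ sgn t) : s * t ≤ 0 := by
  unfold sgn at h
  split_ifs at h <;> first | exact absurd rfl h | nlinarith

lemma measurable_sgn : Measurable sgn :=
  Measurable.ite measurableSet_Ici measurable_const measurable_const

end Sgn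

section KacStep

variable {n : ℕ}

lemma norm_add_smul_sq_of_norm_eq_one {a : Euc n} (ha : ‖a‖ = 1) (v : Euc n) (c : ℝ) :
    ‖v + c • a‖ ^ 2 = ‖v‖ ^ 2 + 2 * c * ⟪a, v⟫ + c ^ 2 := by
  rw [norm_add_sq_real, real_inner_smul_right, real_inner_comm, norm_smul, ha, Real.norm_eq_abs,
    mul_one, sq_abs]
  ring

lemma kacStep_sub (x a z : Euc n) :
    kacStep x a z - x = (z - x) + (sgn ⟪a, z⟫ * |⟪a, x⟫| - ⟪a, z⟫) • a := by
  unfold kacStep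
  abel

lemma norm_kacStep_sub_sq_of_sgn_eq {x a z : Euc n} (ha : ‖a‖ = 1)
    (h : sgn ⟪a, x⟫ = sgn ⟪a, z⟫) :
    ‖kacStep x a z - x‖ ^ 2 = ‖z - x‖ ^ 2 - ⟪a, z - x⟫ ^ 2 := by
  rw [kacStep_sub, norm_add_smul_sq_of_norm_eq_one ha, ← h, sgn_mul_abs, inner_sub_right]
  ring

lemma norm_kacStep_sub_sq_of_sgn_ne {x a z : Euc n} (ha : ‖a‖ = 1)
    (h : sgn ⟪a, x⟫ ≠ sgn ⟪a, z⟫) :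
    ‖kacStep x a z - x‖ ^ 2 = ‖z - x‖ ^ 2 - ⟪a, z - x⟫ ^ 2 + 4 * ⟪a, x⟫ ^ 2 := by
  rw [kacStep_sub, norm_add_smul_sq_of_norm_eq_one ha, sgn_eq_neg_of_sgn_ne h, neg_mul,
    sgn_mul_abs, inner_sub_right]
  ring

lemma norm_kacStep_sub_sq_le {x a z : Euc n} (ha : a ∈ Metric.sphere (0 : Euc n) 1) :
    ‖kacStep x a z - x‖ ^ 2 ≤
      ‖z - x‖ ^ 2 - ⟪a, z - x⟫ ^ 2 + 4 * (wedge x z).indicator (fun v => ⟪v, z - x⟫ ^ 2) a := by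
  have ha' : ‖a‖ = 1 := mem_sphere_zero_iff_norm.mp ha
  by_cases h : sgn ⟪a, x⟫ = sgn ⟪a, z⟫
  · rw [norm_kacStep_sub_sq_of_sgn_eq ha' h, Set.indicator_of_notMem fun hw => hw.2 h]
    simp
  · have hw : a ∈ wedge x z := ⟨ha, h⟩
    rw [norm_kacStep_sub_sq_of_sgn_ne ha' h, Set.indicator_of_mem hw, inner_sub_right]
    nlinarith [mul_nonpos_of_sgn_ne h]

lemma measurableSet_wedge (x z : Euc n) : MeasurableSet (wedge x z) :=
  Metric.isClosed_sphere.measurableSet.inter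
    (measurableSet_eq_fun (measurable_sgn.comp (measurable_id.inner measurable_const))
      (measurable_sgn.comp (measurable_id.inner measurable_const))).compl

end KacStep

section SecondMoment

variable {n : ℕ} {μ : Measure (Euc n)}

lemma inner_eq_sum_mul (a e : Euc n) : ⟪a, e⟫ = ∑ i, a i * e i := by
  simp only [PiLp.inner_apply, RCLike.inner_apply, conj_trivial]
  exact Finset.sum_congr rfl fun i _ => mul_comm _ _

lemma integrable_inner_sq [IsFiniteMeasure μ] (hμ : ∀ᵐ a ∂μ, ‖a‖ ≤ 1) (e : Euc n) :
    Integrable (fun a => ⟪a, e⟫ ^ 2) μ := by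
  refine .of_bound (by fun_prop) (‖e‖ ^ 2) (hμ.mono fun a ha => ?_)
  rw [norm_pow, Real.norm_eq_abs]
  calc |⟪a, e⟫| ^ 2 ≤ (‖a‖ * ‖e‖) ^ 2 := by gcongr; exact abs_real_inner_le_norm a e
    _ ≤ ‖e‖ ^ 2 := by gcongr; nlinarith [norm_nonneg a, norm_nonneg e]

lemma integrable_apply_mul_apply [IsFiniteMeasure μ] (hμ : ∀ᵐ a ∂μ, ‖a‖ ≤ 1) (i j : Fin n) :
    Integrable (fun a : Euc n => a i * a j) μ := by
  refine .of_bound (by fun_prop) 1 (hμ.mono fun a ha => ?_)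
  rw [norm_mul]
  exact mul_le_one₀ ((PiLp.norm_apply_le a i).trans ha) (norm_nonneg _)
    ((PiLp.norm_apply_le a j).trans ha)

lemma integral_inner_sq_eq_quadForm [IsFiniteMeasure μ] (hμ : ∀ᵐ a ∂μ, ‖a‖ ≤ 1) (e : Euc n) :
    ∫ a, ⟪a, e⟫ ^ 2 ∂μ = quadForm (covMat μ) e := by
  have hint i j : Integrable (fun a : Euc n => e i * (a i * a j) * e j) μ :=
    ((integrable_apply_mul_apply hμ i j).const_mul _).mul_const _
  have hexpand (a : Euc n) : ⟪a, e⟫ ^ 2 = ∑ i, ∑ j, e i * (a i * a j) * e j := by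
    rw [inner_eq_sum_mul, sq, Finset.sum_mul_sum]
    exact Finset.sum_congr rfl fun i _ => Finset.sum_congr rfl fun j _ => by ring
  simp_rw [hexpand]
  rw [integral_finsetSum _ fun i _ => integrable_finsetSum _ fun j _ => hint i j]
  refine Finset.sum_congr rfl fun i _ => ?_
  rw [integral_finsetSum _ fun j _ => hint i j]
  refine Finset.sum_congr rfl fun j _ => ?_
  rw [integral_mul_const, integral_const_mul]
  rfl

lemma covMatOn_eq_covMat_restrict (s : Set (Euc n)) : covMatOn μ s = covMat (μ.restrict s) := rfl

end SecondMoment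

/-- **Lemma (Expected decrement).** Fix `x, z ∈ ℝⁿ` and a probability measure `μ`
on the unit sphere `S^{n−1}`, and let `P = P_μ` be the generalized Kaczmarz
projection with respect to `μ`. Then
`E‖Pz − x‖² ≤ [1 − λ_min(E[aaᵀ] − 4 E[aaᵀ 1_{W_{x,z}}(a)])] ‖z − x‖²`. -/
theorem expected_decrement {n : ℕ} (x z : Euc n) (μ : Measure (Euc n))
    [IsProbabilityMeasure μ] (hsupp : ∀ᵐ a ∂μ, a ∈ Metric.sphere (0 : Euc n) 1) :
    ∫ a, ‖kacStep x a z - x‖ ^ 2 ∂μ ≤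
      (1 - lamMin (covMat μ - (4 : ℝ) • covMatOn μ (wedge x z))) * ‖z - x‖ ^ 2 := by
  set e := z - x
  set W := wedge x z
  have hμ : ∀ᵐ a ∂μ, ‖a‖ ≤ 1 := hsupp.mono fun a ha => (mem_sphere_zero_iff_norm.mp ha).le
  have hint := integrable_inner_sq hμ e
  have hW : MeasurableSet W := measurableSet_wedge x z
  have hint₁ : Integrable (fun a => ‖e‖ ^ 2 - ⟪a, e⟫ ^ 2) μ := (integrable_const _).sub hint
  have hint₂ : Integrable (fun a => 4 * W.indicator (fun v => ⟪v, e⟫ ^ 2) a) μ :=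
    (hint.indicator hW).const_mul 4
  calc ∫ a, ‖kacStep x a z - x‖ ^ 2 ∂μ
      ≤ ∫ a, (‖e‖ ^ 2 - ⟪a, e⟫ ^ 2 + 4 * W.indicator (fun v => ⟪v, e⟫ ^ 2) a) ∂μ :=
        integral_mono_of_nonneg (.of_forall fun _ => by positivity) (hint₁.add hint₂)
          (hsupp.mono fun _ ha => norm_kacStep_sub_sq_le ha)
    _ = ‖e‖ ^ 2 - quadForm (covMat μ) e + 4 * quadForm (covMatOn μ W) e := by
        rw [integral_add hint₁ hint₂, integral_sub (integrable_const _) hint,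
          integral_const_mul, integral_indicator hW, integral_inner_sq_eq_quadForm hμ, covMatOn_eq_covMat_restrict,
          integral_inner_sq_eq_quadForm (ae_restrict_of_ae hμ)]
        simp
    _ = ‖e‖ ^ 2 - quadForm (covMat μ - (4 : ℝ) • covMatOn μ W) e := by
        rw [quadForm_sub_smul]
        ring
    _ ≤ (1 - lamMin (covMat μ - (4 : ℝ) • covMatOn μ W)) * ‖e‖ ^ 2 := by
        linarith [lamMin_mul_norm_sq_le (covMat μ - (4 : ℝ) • covMatOn μ W) e]
end

section
/- Fix x, z ∈ ℝⁿ with z ≠ x and a unit vector a ∈ S^{n−1}, and let Pz := z + η·a with η = sign(⟨a, z⟩)·|⟨a, x⟩| − ⟨a, z⟩. If a ∈ W_{x,z} (i.e., ⟨a, x⟩ and ⟨a, z⟩ have opposite signs), then ‖Pz − x‖₂² ≤ ‖z − x‖₂²·(1 + 3⟨z̃, a⟩²), where z̃ = (z − x)/‖z − x‖₂. -/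
open MeasureTheory ProbabilityTheory
open scoped RealInnerProductSpace ENNReal BigOperators

/-- If `a ∈ W_{x,z}` (the signs of `⟨a,x⟩` and `⟨a,z⟩` disagree), then the Kaczmarz
step satisfies `‖Pz − x‖² ≤ ‖z − x‖² (1 + 3⟨z̃, a⟩²)` where `z̃ = (z−x)/‖z−x‖`. -/
theorem kacStep_sq_dist_of_mem_wedge {n : ℕ} (x z a : Euc n) (ha : ‖a‖ = 1)
    (hzx : z ≠ x) (hW : a ∈ wedge x z) :
    ‖kacStep x a z - x‖ ^ 2 ≤
      ‖z - x‖ ^ 2 * (1 + 3 * ⟪‖z - x‖⁻¹ • (z - x), a⟫ ^ 2) := by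
  obtain ⟨-, hsgn⟩ := hW
  set p := ⟪a, x⟫ with hp
  set q := ⟪a, z⟫ with hq
  have hpq : p * q ≤ 0 := by
    unfold sgn at hsgn
    rcases le_or_gt 0 p with h1 | h1 <;> rcases le_or_gt 0 q with h2 | h2
    · simp [h1, h2] at hsgn
    · nlinarith
    · nlinarith
    · simp [not_le.mpr h1, not_le.mpr h2] at hsgn
  have hη : sgn q * |p| - q = -(p + q) := by
    unfold sgn at hsgn ⊢
    by_cases h1 : (0:ℝ) ≤ p <;> by_cases h2 : (0:ℝ) ≤ q <;>
      simp [h1, h2, abs_of_nonneg, abs_of_neg (not_le.mp ‹_›)] at hsgn ⊢ <;> ring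
  have hzx' : z - x ≠ 0 := sub_ne_zero.mpr hzx
  have hn : ‖z - x‖ ≠ 0 := norm_ne_zero_iff.mpr hzx'
  have hstep : kacStep x a z - x = (z - x) + (-(p + q)) • a := by
    rw [kacStep, ← hη]
    module
  have hexp : ‖kacStep x a z - x‖ ^ 2 =
      ‖z - x‖ ^ 2 + 2 * (-(p + q)) * ⟪z - x, a⟫ + (-(p + q)) ^ 2 := by
    rw [hstep, @norm_add_sq_real, real_inner_smul_right, norm_smul, mul_pow, ha]
    simp [mul_pow]
    ring
  have hu : ⟪z - x, a⟫ = q - p := by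
    rw [real_inner_comm, inner_sub_right]
  have hrhs : ⟪‖z - x‖⁻¹ • (z - x), a⟫ = ‖z - x‖⁻¹ * (q - p) := by
    rw [real_inner_smul_left, hu]
  rw [hexp, hu, hrhs]
  have h2 : ‖z - x‖ ^ 2 * (1 + 3 * (‖z - x‖⁻¹ * (q - p)) ^ 2)
      = ‖z - x‖ ^ 2 + 3 * (q - p) ^ 2 := by
    field_simp
  rw [h2]
  nlinarith [sq_nonneg q, sq_nonneg (q - p)]
end
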